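/- arXiv:math/9912158 — 3 statements merged into one kernel-verified Lean document; each statement's English description precedes it below -/
import Mathlib

section
/- Let a = (s,t) with s = (s_k ∈ GL(W_k))_{k∈I} and t ∈ ℂ*, and fix m : H → ℤ with m(h̄) = −m(h). Let (B^1,i^1,j^1) on (V^1,W) and (B^2,i^2,j^2) on (V^2,W) be stable ADHM data, and suppose there are ρ^1 ∈ ∏_k GL(V^1_k) and ρ^2 ∈ ∏_k GL(V^2_k) such that for p = 1,2: t^{m(h)+1}·B^p_h = (ρ^p_{in(h)})^{-1}∘B^p_h∘ρ^p_{out(h)} for all h, t·i^p_k∘s_k^{-1} = (ρ^p_k)^{-1}∘i^p_k and t·s_k∘j^p_k = j^p_k∘ρ^p_k for all k. If ξ is an intertwiner from (B^1,i^1,j^1) to (B^2,i^2,j^2), then ξ is equivariant: ρ^2_k∘ξ_k = ξ_k∘ρ^1_k for all k ∈ I. -/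
noncomputable section

/-- The data of a finite graph without edge loops, presented by its set `H` of oriented
edges over the vertex set `I`: source and target maps `src`, `tgt`, and a fixed-point-free
orientation-reversing involution `bar`. -/
structure GraphData (I H : Type) where
  src : H → I
  tgt : H → I
  bar : H → H
  bar_invol : ∀ h, bar (bar h) = h
  bar_ne_self : ∀ h, bar h ≠ h
  src_bar : ∀ h, src (bar h) = tgt h
  tgt_bar : ∀ h, tgt (bar h) = src h
  no_loops : ∀ h, src h ≠ tgt h

/-- Transport of the fibres of a family of normed spaces along an equality of indices. -/
def vCast {I : Type} (V : I → Type)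
    [∀ k, NormedAddCommGroup (V k)] [∀ k, NormedSpace ℂ (V k)]
    {k l : I} (e : k = l) : V k ≃L[ℂ] V l := by
  subst e
  exact ContinuousLinearEquiv.refl ℂ (V k)

/-- Stability of an ADHM datum `(B, i, j)`: the only family of subspaces `S k ⊆ V k`
which is `B`-invariant and contained in `ker (j k)` is the zero family. -/
def IsStable {I H : Type} (G : GraphData I H) (V W : I → Type)
    [∀ k, NormedAddCommGroup (V k)] [∀ k, NormedSpace ℂ (V k)]
    [∀ k, NormedAddCommGroup (W k)] [∀ k, NormedSpace ℂ (W k)]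
    (B : ∀ h : H, V (G.src h) →L[ℂ] V (G.tgt h))
    (j : ∀ k : I, V k →L[ℂ] W k) : Prop :=
  ∀ S : ∀ k : I, Submodule ℂ (V k),
    (∀ h : H, ∀ x ∈ S (G.src h), B h x ∈ S (G.tgt h)) →
    (∀ k : I, ∀ x ∈ S k, j k x = 0) →
    ∀ k : I, S k = ⊥

/-- An intertwiner `ξ` from the ADHM datum `(B¹, i¹, j¹)` on `(V¹, W)` to the ADHM datum
`(B², i², j²)` on `(V², W)`. -/
def IsIntertwiner {I H : Type} (G : GraphData I H) (V1 V2 W : I → Type)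
    [∀ k, NormedAddCommGroup (V1 k)] [∀ k, NormedSpace ℂ (V1 k)]
    [∀ k, NormedAddCommGroup (V2 k)] [∀ k, NormedSpace ℂ (V2 k)]
    [∀ k, NormedAddCommGroup (W k)] [∀ k, NormedSpace ℂ (W k)]
    (B1 : ∀ h : H, V1 (G.src h) →L[ℂ] V1 (G.tgt h))
    (i1 : ∀ k : I, W k →L[ℂ] V1 k) (j1 : ∀ k : I, V1 k →L[ℂ] W k)
    (B2 : ∀ h : H, V2 (G.src h) →L[ℂ] V2 (G.tgt h))
    (i2 : ∀ k : I, W k →L[ℂ] V2 k) (j2 : ∀ k : I, V2 k →L[ℂ] W k)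
    (ξ : ∀ k : I, V1 k →L[ℂ] V2 k) : Prop :=
  (∀ h : H, (ξ (G.tgt h)).comp (B1 h) = (B2 h).comp (ξ (G.src h))) ∧
  (∀ k : I, (ξ k).comp (i1 k) = i2 k) ∧
  (∀ k : I, j1 k = (j2 k).comp (ξ k))

/-- Let `a = (s, t)` with `s ∈ ∏ₖ GL(W_k)`, `t ∈ ℂ*`, and `m : H → ℤ`
with `m(h̄) = −m(h)`. If `(B¹,i¹,j¹)` and `(B²,i²,j²)` are stable ADHM data which are
fixed by `a` via `ρ¹ ∈ G_{V¹}`, `ρ² ∈ G_{V²}`, then every intertwiner `ξ` from the first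
to the second is equivariant: `ρ²_k ∘ ξ_k = ξ_k ∘ ρ¹_k` for all `k`. -/
theorem statement13
    {I H : Type} [Fintype I] [Fintype H] [DecidableEq I]
    (G : GraphData I H) (V1 V2 W : I → Type)
    [∀ k, NormedAddCommGroup (V1 k)] [∀ k, NormedSpace ℂ (V1 k)]
    [∀ k, FiniteDimensional ℂ (V1 k)]
    [∀ k, NormedAddCommGroup (V2 k)] [∀ k, NormedSpace ℂ (V2 k)]
    [∀ k, FiniteDimensional ℂ (V2 k)]
    [∀ k, NormedAddCommGroup (W k)] [∀ k, NormedSpace ℂ (W k)]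
    [∀ k, FiniteDimensional ℂ (W k)]
    (t : ℂ) (ht0 : t ≠ 0)
    (s : ∀ k : I, W k ≃L[ℂ] W k)
    (m : H → ℤ) (hm : ∀ h : H, m (G.bar h) = - m h)
    (B1 : ∀ h : H, V1 (G.src h) →L[ℂ] V1 (G.tgt h))
    (i1 : ∀ k : I, W k →L[ℂ] V1 k) (j1 : ∀ k : I, V1 k →L[ℂ] W k)
    (B2 : ∀ h : H, V2 (G.src h) →L[ℂ] V2 (G.tgt h))
    (i2 : ∀ k : I, W k →L[ℂ] V2 k) (j2 : ∀ k : I, V2 k →L[ℂ] W k)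
    (hst1 : IsStable G V1 W B1 j1) (hst2 : IsStable G V2 W B2 j2)
    (ρ1 : ∀ k : I, V1 k ≃L[ℂ] V1 k) (ρ2 : ∀ k : I, V2 k ≃L[ℂ] V2 k)
    (hB1 : ∀ h : H, t ^ (m h + 1) • B1 h =
      (((ρ1 (G.tgt h)).symm : V1 (G.tgt h) →L[ℂ] V1 (G.tgt h)).comp (B1 h)).comp
        (ρ1 (G.src h) : V1 (G.src h) →L[ℂ] V1 (G.src h)))
    (hB2 : ∀ h : H, t ^ (m h + 1) • B2 h =
      (((ρ2 (G.tgt h)).symm : V2 (G.tgt h) →L[ℂ] V2 (G.tgt h)).comp (B2 h)).comp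
        (ρ2 (G.src h) : V2 (G.src h) →L[ℂ] V2 (G.src h)))
    (hi1 : ∀ k : I, t • ((i1 k).comp ((s k).symm : W k →L[ℂ] W k)) =
      ((ρ1 k).symm : V1 k →L[ℂ] V1 k).comp (i1 k))
    (hi2 : ∀ k : I, t • ((i2 k).comp ((s k).symm : W k →L[ℂ] W k)) =
      ((ρ2 k).symm : V2 k →L[ℂ] V2 k).comp (i2 k))
    (hj1 : ∀ k : I, t • ((s k : W k →L[ℂ] W k).comp (j1 k)) =
      (j1 k).comp (ρ1 k : V1 k →L[ℂ] V1 k))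
    (hj2 : ∀ k : I, t • ((s k : W k →L[ℂ] W k).comp (j2 k)) =
      (j2 k).comp (ρ2 k : V2 k →L[ℂ] V2 k))
    (ξ : ∀ k : I, V1 k →L[ℂ] V2 k)
    (hξ : IsIntertwiner G V1 V2 W B1 i1 j1 B2 i2 j2 ξ) :
    ∀ k : I, (ρ2 k : V2 k →L[ℂ] V2 k).comp (ξ k)
      = (ξ k).comp (ρ1 k : V1 k →L[ℂ] V1 k) := by
  obtain ⟨hξB, hξi, hξj⟩ := hξ
  -- pointwise versions of hypotheses
  have hB1' : ∀ h (x : V1 (G.src h)), t ^ (m h + 1) • B1 h x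
      = (ρ1 (G.tgt h)).symm (B1 h (ρ1 (G.src h) x)) := by
    intro h x
    have := ContinuousLinearMap.ext_iff.mp (hB1 h) x
    simpa using this
  have hB2' : ∀ h (x : V2 (G.src h)), t ^ (m h + 1) • B2 h x
      = (ρ2 (G.tgt h)).symm (B2 h (ρ2 (G.src h) x)) := by
    intro h x
    have := ContinuousLinearMap.ext_iff.mp (hB2 h) x
    simpa using this
  have hj1' : ∀ k (x : V1 k), t • s k (j1 k x) = j1 k (ρ1 k x) := by
    intro k x
    have := ContinuousLinearMap.ext_iff.mp (hj1 k) x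
    simpa using this
  have hj2' : ∀ k (x : V2 k), t • s k (j2 k x) = j2 k (ρ2 k x) := by
    intro k x
    have := ContinuousLinearMap.ext_iff.mp (hj2 k) x
    simpa using this
  have hξB' : ∀ h (x : V1 (G.src h)), ξ (G.tgt h) (B1 h x) = B2 h (ξ (G.src h) x) := by
    intro h x
    have := ContinuousLinearMap.ext_iff.mp (hξB h) x
    simpa using this
  have hξj' : ∀ k (x : V1 k), j1 k x = j2 k (ξ k x) := by
    intro k x
    have := ContinuousLinearMap.ext_iff.mp (hξj k) x
    simpa using this
  -- the defect map δ
  set δ : ∀ k : I, V1 k →L[ℂ] V2 k := fun k =>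
    ξ k - (ρ2 k : V2 k →L[ℂ] V2 k).comp ((ξ k).comp ((ρ1 k).symm : V1 k →L[ℂ] V1 k))
    with hδ
  have hδ' : ∀ k (x : V1 k), δ k x = ξ k x - ρ2 k (ξ k ((ρ1 k).symm x)) := by
    intro k x; simp [hδ]
  -- δ intertwines B1 and B2
  have keyB : ∀ h (y : V1 (G.src h)), δ (G.tgt h) (B1 h y) = B2 h (δ (G.src h) y) := by
    intro h y
    have e1 : (ρ1 (G.tgt h)).symm (B1 h y)
        = t ^ (m h + 1) • B1 h ((ρ1 (G.src h)).symm y) := by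
      have := hB1' h ((ρ1 (G.src h)).symm y)
      simp only [ContinuousLinearEquiv.apply_symm_apply] at this
      rw [this]
    have e2 : ρ2 (G.tgt h) (t ^ (m h + 1) • B2 h (ξ (G.src h) ((ρ1 (G.src h)).symm y)))
        = B2 h (ρ2 (G.src h) (ξ (G.src h) ((ρ1 (G.src h)).symm y))) := by
      rw [hB2' h (ξ (G.src h) ((ρ1 (G.src h)).symm y))]
      simp
    calc δ (G.tgt h) (B1 h y)
        = ξ (G.tgt h) (B1 h y) - ρ2 (G.tgt h) (ξ (G.tgt h) ((ρ1 (G.tgt h)).symm (B1 h y))) :=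
          hδ' _ _
      _ = B2 h (ξ (G.src h) y)
          - ρ2 (G.tgt h) (t ^ (m h + 1) • ξ (G.tgt h) (B1 h ((ρ1 (G.src h)).symm y))) := by
          rw [hξB' h y, e1]; simp
      _ = B2 h (ξ (G.src h) y)
          - ρ2 (G.tgt h) (t ^ (m h + 1) • B2 h (ξ (G.src h) ((ρ1 (G.src h)).symm y))) := by
          rw [hξB' h ((ρ1 (G.src h)).symm y)]
      _ = B2 h (ξ (G.src h) y)
          - B2 h (ρ2 (G.src h) (ξ (G.src h) ((ρ1 (G.src h)).symm y))) := by rw [e2]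
      _ = B2 h (δ (G.src h) y) := by rw [hδ' _ _]; simp
  -- j2 vanishes on the range of δ
  have keyj : ∀ k (y : V1 k), j2 k (δ k y) = 0 := by
    intro k y
    have e1 : j2 k (ρ2 k (ξ k ((ρ1 k).symm y))) = t • s k (j2 k (ξ k ((ρ1 k).symm y))) :=
      (hj2' k _).symm
    have e2 : t • s k (j1 k ((ρ1 k).symm y)) = j1 k y := by
      have := hj1' k ((ρ1 k).symm y)
      simpa using this
    rw [hδ' k y, map_sub, e1, ← hξj' k ((ρ1 k).symm y), e2, hξj' k y, sub_self]
  -- stability of the second datum kills δ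
  have hzero : ∀ k (y : V1 k), δ k y = 0 := by
    have := hst2 (fun k => LinearMap.range (δ k : V1 k →ₗ[ℂ] V2 k))
      (by
        rintro h x ⟨y, rfl⟩
        refine ⟨B1 h y, ?_⟩
        simpa using keyB h y)
      (by
        rintro k x ⟨y, rfl⟩
        exact keyj k y)
    intro k y
    have : δ k y ∈ (⊥ : Submodule ℂ (V2 k)) := by
      rw [← this k]; exact ⟨y, rfl⟩
    simpa using this
  intro k
  ext x
  have := hzero k (ρ1 k x)
  rw [hδ' k (ρ1 k x)] at this
  simp only [ContinuousLinearEquiv.symm_apply_apply] at this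
  have h2 : ξ k (ρ1 k x) = ρ2 k (ξ k x) := by
    have := sub_eq_zero.mp this
    exact this.symm ▸ rfl
  simpa using h2.symm
end
end

section
/- For every v with 0 ≤ v ≤ N, all r, s ∈ ℤ, and every v-bisymmetric f ∈ K, one has e_{v+1,r}(f_{v+1,s}(f)) − f_{v,s}(e_{v,r}(f)) = (q − q^{-1})^{-1} · ( Σ_{m=1}^{N} x_m^{r+s-1} · B_v(x_m) / ∏_{n=1, n≠m}^{N} (x_m − x_n) ) · f, where B_v(x) = ∏_{u=1}^{v} (q^{-1}x − q·x_u) · ∏_{t=v+1}^{N} (q·x − q^{-1}x_t). (This is the Drinfel'd relation [x^+(z), x^-(w)] = (ψ^+ − ψ^-)-term, verified on the equivariant K-theory of the quiver variety of type A₁, i.e., of cotangent bundles of Grassmannians.) -/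
noncomputable section

/-- The field `ℚ(q, x₁, …, x_N)` of rational functions over `ℚ` in `N + 1` variables:
the fraction field of the polynomial ring `ℚ[q, x₁, …, x_N]`, the variable `none`
being `q` and `some m` being `x_{m+1}`. -/
abbrev RatFld (N : ℕ) : Type := FractionRing (MvPolynomial (Option (Fin N)) ℚ)

/-- The variable `q` of `ℚ(q, x₁, …, x_N)`. -/
def qq (N : ℕ) : RatFld N :=
  algebraMap (MvPolynomial (Option (Fin N)) ℚ) (RatFld N) (MvPolynomial.X none)

/-- The variable `x_{m+1}` of `ℚ(q, x₁, …, x_N)` (with the `0`-based index `m`). -/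
def xx (N : ℕ) (m : Fin N) : RatFld N :=
  algebraMap (MvPolynomial (Option (Fin N)) ℚ) (RatFld N) (MvPolynomial.X (some m))

/-- `σ` is the field homomorphism (necessarily the unique automorphism) of
`ℚ(q, x₁, …, x_N)` interchanging `x_{a+1}` and `x_{b+1}` and fixing `q` and all other
variables. -/
def IsSwap (N : ℕ) (a b : Fin N) (σ : RatFld N →+* RatFld N) : Prop :=
  σ (qq N) = qq N ∧ σ (xx N a) = xx N b ∧ σ (xx N b) = xx N a ∧
    ∀ c : Fin N, c ≠ a → c ≠ b → σ (xx N c) = xx N c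

/-- `f ∈ ℚ(q, x₁, …, x_N)` is `v`-bisymmetric: it is fixed by every (ring endomorphism
induced by an) automorphism permuting `x₁, …, x_v` among themselves and
`x_{v+1}, …, x_N` among themselves while fixing `q`. -/
def Bisymm (N : ℕ) (v : ℕ) (f : RatFld N) : Prop :=
  ∀ σ : RatFld N →+* RatFld N,
    σ (qq N) = qq N →
    (∃ π : Equiv.Perm (Fin N),
      (∀ m : Fin N, ((m : ℕ) + 1 ≤ v ↔ ((π m : ℕ) + 1 ≤ v))) ∧
      ∀ m : Fin N, σ (xx N m) = xx N (π m)) →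
    σ f = f

/-- The operator `e_{v,r}` (for `1 ≤ v ≤ N`; `e_{v,r} = 0` for `v < 1` or `v > N`),
`e_{v,r}(f) = Σ_{k=v}^{N} s_{v,k}(f) · x_k^{r−N} ·
∏_{t=v, t≠k}^{N} (q·x_k − q⁻¹x_t)/(x_k − x_t)`,
where `s` is the family of swap automorphisms. -/
def eOp (N : ℕ) (s : Fin N → Fin N → (RatFld N →+* RatFld N)) (v : ℕ) (r : ℤ)
    (f : RatFld N) : RatFld N :=
  if hv : 1 ≤ v ∧ v ≤ N then
    ∑ k ∈ Finset.univ.filter (fun k : Fin N => v ≤ (k : ℕ) + 1),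
      s ⟨v - 1, by omega⟩ k f * xx N k ^ (r - (N : ℤ)) *
        ∏ t ∈ (Finset.univ.filter (fun t : Fin N => v ≤ (t : ℕ) + 1)).erase k,
          (qq N * xx N k - (qq N)⁻¹ * xx N t) / (xx N k - xx N t)
  else 0

/-- The operator `f_{v,r}` (for `1 ≤ v ≤ N`; `f_{v,r} = 0` for `v < 1` or `v > N`),
`f_{v,r}(g) = Σ_{l=1}^{v} s_{l,v}(g) · x_l^{r+N} ·
∏_{u=1, u≠l}^{v} (q⁻¹x_l − q·x_u)/(x_l − x_u)`. -/
def fOp (N : ℕ) (s : Fin N → Fin N → (RatFld N →+* RatFld N)) (v : ℕ) (r : ℤ)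
    (g : RatFld N) : RatFld N :=
  if hv : 1 ≤ v ∧ v ≤ N then
    ∑ l ∈ Finset.univ.filter (fun l : Fin N => (l : ℕ) + 1 ≤ v),
      s l ⟨v - 1, by omega⟩ g * xx N l ^ (r + (N : ℤ)) *
        ∏ u ∈ (Finset.univ.filter (fun u : Fin N => (u : ℕ) + 1 ≤ v)).erase l,
          ((qq N)⁻¹ * xx N l - qq N * xx N u) / (xx N l - xx N u)
  else 0

/-- The polynomial `B_v(x) = ∏_{u=1}^{v} (q⁻¹x − q·x_u) · ∏_{t=v+1}^{N} (q·x − q⁻¹x_t)`,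
evaluated at `z`. -/
def bPoly (N : ℕ) (v : ℕ) (z : RatFld N) : RatFld N :=
  (∏ u ∈ Finset.univ.filter (fun u : Fin N => (u : ℕ) + 1 ≤ v),
      ((qq N)⁻¹ * z - qq N * xx N u)) *
  ∏ t ∈ Finset.univ.filter (fun t : Fin N => v + 1 ≤ (t : ℕ) + 1),
      (qq N * z - (qq N)⁻¹ * xx N t)

lemma ratfld_hom_ext {N : ℕ} {σ τ : RatFld N →+* RatFld N}
    (hq : σ (qq N) = τ (qq N)) (hx : ∀ m, σ (xx N m) = τ (xx N m)) : σ = τ := by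
  apply IsLocalization.ringHom_ext (nonZeroDivisors (MvPolynomial (Option (Fin N)) ℚ))
  apply MvPolynomial.ringHom_ext
  · intro rr
    have h1 : ((σ.comp (algebraMap (MvPolynomial (Option (Fin N)) ℚ) (RatFld N))).comp
        (MvPolynomial.C : ℚ →+* MvPolynomial (Option (Fin N)) ℚ)) =
        ((τ.comp (algebraMap (MvPolynomial (Option (Fin N)) ℚ) (RatFld N))).comp
        (MvPolynomial.C : ℚ →+* MvPolynomial (Option (Fin N)) ℚ)) := Subsingleton.elim _ _
    exact DFunLike.congr_fun h1 rr
  · rintro (_ | m)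
    · exact hq
    · exact hx m

lemma algMap_inj (N : ℕ) :
    Function.Injective (algebraMap (MvPolynomial (Option (Fin N)) ℚ) (RatFld N)) :=
  IsFractionRing.injective _ _

lemma qq_ne_zero (N : ℕ) : qq N ≠ 0 := by
  intro h
  have := algMap_inj N (h.trans (map_zero _).symm)
  exact MvPolynomial.X_ne_zero _ this

lemma xx_ne_zero (N : ℕ) (m : Fin N) : xx N m ≠ 0 := by
  intro h
  have := algMap_inj N (h.trans (map_zero _).symm)
  exact MvPolynomial.X_ne_zero _ this

lemma q_sub_qinv_ne_zero (N : ℕ) : qq N - (qq N)⁻¹ ≠ 0 := by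
  intro h
  have hq := qq_ne_zero N
  have h2 : qq N * qq N = 1 := by
    nth_rewrite 2 [show qq N = (qq N)⁻¹ from by linear_combination h]
    exact mul_inv_cancel₀ hq
  have h3 : algebraMap (MvPolynomial (Option (Fin N)) ℚ) (RatFld N)
      (MvPolynomial.X none * MvPolynomial.X none) =
      algebraMap (MvPolynomial (Option (Fin N)) ℚ) (RatFld N) 1 := by
    rw [map_mul, map_one]; exact h2
  have h4 := algMap_inj N h3
  have := congrArg (MvPolynomial.eval (fun _ => (0 : ℚ))) h4
  simp at this

section Swaps

variable {N : ℕ} {s : Fin N → Fin N → (RatFld N →+* RatFld N)}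
  (hs : ∀ a b : Fin N, IsSwap N a b (s a b))

include hs

lemma swap_self (a : Fin N) : s a a = RingHom.id (RatFld N) := by
  apply ratfld_hom_ext
  · exact (hs a a).1
  · intro m
    by_cases h : m = a
    · subst h; exact (hs m m).2.1
    · exact (hs a a).2.2.2 m h h

lemma swap_swap (a b : Fin N) : (s a b).comp (s a b) = RingHom.id (RatFld N) := by
  apply ratfld_hom_ext
  · simp [RingHom.comp_apply, (hs a b).1]
  · intro m
    simp only [RingHom.comp_apply, RingHom.id_apply]
    by_cases h1 : m = a
    · subst h1; rw [(hs m b).2.1, (hs m b).2.2.1]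
    · by_cases h2 : m = b
      · subst h2; rw [(hs a m).2.2.1, (hs a m).2.1]
      · rw [(hs a b).2.2.2 m h1 h2, (hs a b).2.2.2 m h1 h2]

/-- `s a c ∘ s b c ∘ s a b = s b c` (applied right to left). -/
lemma comp3 (a b c : Fin N) (hab : a ≠ b) (hbc : b ≠ c) (hac : a ≠ c) :
    (s a c).comp ((s b c).comp (s a b)) = s b c := by
  apply ratfld_hom_ext
  · simp [RingHom.comp_apply, (hs a b).1, (hs b c).1, (hs a c).1]
  · intro m
    simp only [RingHom.comp_apply]
    by_cases h1 : m = a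
    · subst h1
      rw [(hs m b).2.1, (hs b c).2.1, (hs m c).2.2.1, (hs b c).2.2.2 m hab hac]
    · by_cases h2 : m = b
      · subst h2
        rw [(hs a m).2.2.1, (hs m c).2.2.2 a hab hac, (hs a c).2.1, (hs m c).2.1]
      · by_cases h3 : m = c
        · subst h3
          rw [(hs a b).2.2.2 m hac.symm hbc.symm, (hs b m).2.2.1,
            (hs a m).2.2.2 b hab.symm hbc]
        · rw [(hs a b).2.2.2 m h1 h2, (hs b c).2.2.2 m h2 h3,
            (hs a c).2.2.2 m h1 h3]

/-- `s a c ∘ s a b ∘ s b c = s a b` (applied right to left). -/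
lemma comp3' (a b c : Fin N) (hab : a ≠ b) (hbc : b ≠ c) (hac : a ≠ c) :
    (s a c).comp ((s a b).comp (s b c)) = s a b := by
  apply ratfld_hom_ext
  · simp [RingHom.comp_apply, (hs a b).1, (hs b c).1, (hs a c).1]
  · intro m
    simp only [RingHom.comp_apply]
    by_cases h1 : m = a
    · subst h1
      rw [(hs b c).2.2.2 m hab hac, (hs m b).2.1, (hs m c).2.2.2 b (Ne.symm hab) hbc]
    · by_cases h2 : m = b
      · subst h2
        rw [(hs m c).2.1, (hs a m).2.2.2 c hac.symm (Ne.symm hbc), (hs a c).2.2.1,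
          (hs a m).2.2.1]
      · by_cases h3 : m = c
        · subst h3
          rw [(hs b m).2.2.1, (hs a b).2.2.1, (hs a m).2.1,
            (hs a b).2.2.2 m hac.symm hbc.symm]
        · rw [(hs b c).2.2.2 m h2 h3, (hs a b).2.2.2 m h1 h2,
            (hs a c).2.2.2 m h1 h3]

end Swaps


section Swaps2

variable {N : ℕ} {s : Fin N → Fin N → (RatFld N →+* RatFld N)}
  (hs : ∀ a b : Fin N, IsSwap N a b (s a b))
  {v : ℕ} {f : RatFld N} (hf : Bisymm N v f)

include hs hf

lemma bisymm_swap (a b : Fin N) (h : ((a : ℕ) + 1 ≤ v ↔ (b : ℕ) + 1 ≤ v)) :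
    s a b f = f := by
  apply hf _ (hs a b).1
  refine ⟨Equiv.swap a b, fun m => ?_, fun m => ?_⟩
  · rcases eq_or_ne m a with rfl | hma
    · rw [Equiv.swap_apply_left]; exact h
    · rcases eq_or_ne m b with rfl | hmb
      · rw [Equiv.swap_apply_right]; exact h.symm
      · rw [Equiv.swap_apply_of_ne_of_ne hma hmb]
  · rcases eq_or_ne m a with rfl | hma
    · rw [Equiv.swap_apply_left]; exact (hs m b).2.1
    · rcases eq_or_ne m b with rfl | hmb
      · rw [Equiv.swap_apply_right]; exact (hs a m).2.2.1
      · rw [Equiv.swap_apply_of_ne_of_ne hma hmb]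
        exact (hs a b).2.2.2 m hma hmb

lemma offdiag1 (l V k : Fin N) (hl : (l : ℕ) + 1 ≤ v) (hV : v ≤ (V : ℕ))
    (hk : v ≤ (k : ℕ)) : s V k (s l V f) = s l k f := by
  rcases eq_or_ne V k with rfl | hVk
  · rw [swap_self hs V]; rfl
  · have hlV : l ≠ V := fun h => by simp [h] at hl; omega
    have hlk : l ≠ k := fun h => by simp [h] at hl; omega
    have h3 := comp3 (s := s) hs l V k hlV hVk hlk
    have h4 : s l k (s V k (s l V f)) = s V k f := DFunLike.congr_fun h3 f
    rw [bisymm_swap hs hf V k (by constructor <;> (intro h; omega))] at h4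
    have h5 := congrArg (s l k) h4
    have h6 : s l k (s l k (s V k (s l V f))) = s V k (s l V f) :=
      DFunLike.congr_fun (swap_swap hs l k) _
    rw [h6] at h5
    exact h5

lemma offdiag2 (l W k : Fin N) (hl : (l : ℕ) + 1 ≤ v) (hW : (W : ℕ) + 1 ≤ v)
    (hk : v ≤ (k : ℕ)) : s l W (s W k f) = s l k f := by
  rcases eq_or_ne l W with rfl | hlW
  · rw [show s l l = RingHom.id (RatFld N) from swap_self hs l]; rfl
  · have hWk : W ≠ k := fun h => by simp [h] at hW; omega
    have hlk : l ≠ k := fun h => by simp [h] at hl; omega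
    have h3 := comp3' (s := s) hs l W k hlW hWk hlk
    have h4 : s l k (s l W (s W k f)) = s l W f := DFunLike.congr_fun h3 f
    rw [bisymm_swap hs hf l W (by constructor <;> (intro h; omega))] at h4
    have h5 := congrArg (s l k) h4
    have h6 : s l k (s l k (s l W (s W k f))) = s l W (s W k f) :=
      DFunLike.congr_fun (swap_swap hs l k) _
    rw [h6] at h5
    exact h5

end Swaps2

/-- `(q⁻¹ x_a - q x_b)/(x_a - x_b)`. -/
def FF1 (N : ℕ) (a b : Fin N) : RatFld N :=
  ((qq N)⁻¹ * xx N a - qq N * xx N b) / (xx N a - xx N b)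

/-- `(q x_a - q⁻¹ x_b)/(x_a - x_b)`. -/
def FF2 (N : ℕ) (a b : Fin N) : RatFld N :=
  (qq N * xx N a - (qq N)⁻¹ * xx N b) / (xx N a - xx N b)

lemma FF1_eq_FF2 (N : ℕ) (a b : Fin N) : FF1 N a b = FF2 N b a := by
  rw [FF1, FF2, show ((qq N)⁻¹ * xx N a - qq N * xx N b)
      = -(qq N * xx N b - (qq N)⁻¹ * xx N a) by ring,
    show (xx N a - xx N b) = -(xx N b - xx N a) by ring, neg_div_neg_eq]

section MapLemmas

variable {N : ℕ} (σ : RatFld N →+* RatFld N) (hσ : σ (qq N) = qq N)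

include hσ

lemma map_FF1 (a b : Fin N) :
    σ (FF1 N a b) = ((qq N)⁻¹ * σ (xx N a) - qq N * σ (xx N b)) /
      (σ (xx N a) - σ (xx N b)) := by
  rw [FF1, map_div₀, map_sub, map_sub, map_mul, map_mul, map_inv₀, hσ]

lemma map_FF2 (a b : Fin N) :
    σ (FF2 N a b) = (qq N * σ (xx N a) - (qq N)⁻¹ * σ (xx N b)) /
      (σ (xx N a) - σ (xx N b)) := by
  rw [FF2, map_div₀, map_sub, map_sub, map_mul, map_mul, map_inv₀, hσ]

end MapLemmas

lemma FF1_def (N : ℕ) (a b : Fin N) :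
    ((qq N)⁻¹ * xx N a - qq N * xx N b) / (xx N a - xx N b) = FF1 N a b := rfl

lemma FF2_def (N : ℕ) (a b : Fin N) :
    (qq N * xx N a - (qq N)⁻¹ * xx N b) / (xx N a - xx N b) = FF2 N a b := rfl

/-- The off-diagonal summand. -/
def Gterm (N : ℕ) (s : Fin N → Fin N → (RatFld N →+* RatFld N)) (v : ℕ) (r t : ℤ)
    (f : RatFld N) (l k : Fin N) : RatFld N :=
  s l k f * (xx N l ^ (t + (N : ℤ)) * xx N k ^ (r - (N : ℤ)) * FF1 N l k *
    (∏ u ∈ (Finset.univ.filter (fun u : Fin N => (u : ℕ) + 1 ≤ v)).erase l, FF1 N l u) *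
    (∏ p ∈ (Finset.univ.filter (fun p : Fin N => v + 1 ≤ (p : ℕ) + 1)).erase k, FF2 N k p))

/-- The diagonal summand of `e_{v+1} ∘ f_{v+1}`. -/
def D1term (N : ℕ) (v : ℕ) (r t : ℤ) (f : RatFld N) (k : Fin N) : RatFld N :=
  f * (xx N k ^ (t + (N : ℤ)) * xx N k ^ (r - (N : ℤ)) *
    (∏ u ∈ Finset.univ.filter (fun u : Fin N => (u : ℕ) + 1 ≤ v), FF1 N k u) *
    (∏ p ∈ (Finset.univ.filter (fun p : Fin N => v + 1 ≤ (p : ℕ) + 1)).erase k, FF2 N k p))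

/-- The diagonal summand of `f_v ∘ e_v`. -/
def D2term (N : ℕ) (v : ℕ) (r t : ℤ) (f : RatFld N) (l : Fin N) : RatFld N :=
  f * (xx N l ^ (t + (N : ℤ)) * xx N l ^ (r - (N : ℤ)) *
    (∏ u ∈ (Finset.univ.filter (fun u : Fin N => (u : ℕ) + 1 ≤ v)).erase l, FF1 N l u) *
    (∏ p ∈ Finset.univ.filter (fun p : Fin N => v + 1 ≤ (p : ℕ) + 1), FF2 N l p))

lemma claim1 (N : ℕ) (s : Fin N → Fin N → (RatFld N →+* RatFld N))
    (hs : ∀ a b : Fin N, IsSwap N a b (s a b)) (v : ℕ) (hv : v ≤ N) (r t : ℤ)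
    (f : RatFld N) (hf : Bisymm N v f) :
    eOp N s (v + 1) r (fOp N s (v + 1) t f)
      = ∑ k ∈ Finset.univ.filter (fun k : Fin N => v + 1 ≤ (k : ℕ) + 1),
          ((∑ l ∈ Finset.univ.filter (fun l : Fin N => (l : ℕ) + 1 ≤ v),
            Gterm N s v r t f l k) + D1term N v r t f k) := by
  by_cases hvN : v < N
  · set V : Fin N := ⟨v, hvN⟩ with hV
    have hVval : (V : ℕ) = v := rfl
    have hVnot : V ∉ Finset.univ.filter (fun l : Fin N => (l : ℕ) + 1 ≤ v) := by
      simp [hVval]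
    have hPQ : Finset.univ.filter (fun l : Fin N => (l : ℕ) + 1 ≤ v + 1)
        = insert V (Finset.univ.filter (fun l : Fin N => (l : ℕ) + 1 ≤ v)) := by
      ext m
      simp only [Finset.mem_filter, Finset.mem_univ, true_and, Finset.mem_insert,
        Fin.ext_iff, hVval]
      omega
    rw [eOp, dif_pos ⟨by omega, by omega⟩, fOp, dif_pos ⟨by omega, by omega⟩]
    simp only [Nat.add_sub_cancel, FF1_def, FF2_def]
    rw [hPQ]
    apply Finset.sum_congr rfl
    intro k hk
    have hkv : v ≤ (k : ℕ) := by
      have := Finset.mem_filter.mp hk; omega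
    rw [map_sum, Finset.sum_insert hVnot, add_mul, add_mul, Finset.sum_mul,
      Finset.sum_mul, add_comm]
    congr 1
    · -- off-diagonal part
      apply Finset.sum_congr rfl
      intro l hl
      have hlv : (l : ℕ) + 1 ≤ v := by
        have := Finset.mem_filter.mp hl; omega
      have hlV : l ≠ V := by
        intro h; rw [h] at hlv; omega
      have hlk : l ≠ k := by
        intro h; rw [h] at hlv; omega
      have hVltset : V ∉ (Finset.univ.filter
          (fun u : Fin N => (u : ℕ) + 1 ≤ v)).erase l := by
        intro h; exact hVnot (Finset.mem_of_mem_erase h)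
      rw [Finset.erase_insert_of_ne hlV.symm, Finset.prod_insert hVltset,
        map_mul, map_mul, map_zpow₀, map_mul]
      have hσf : s V k (s l V f) = s l k f :=
        offdiag1 hs hf l V k hlv (by omega) hkv
      have hσxl : s V k (xx N l) = xx N l := (hs V k).2.2.2 l hlV hlk
      have hσF1V : s V k (FF1 N l V) = FF1 N l k := by
        rw [map_FF1 _ (hs V k).1, hσxl, (hs V k).2.1, FF1_def]
      have hσprod : s V k (∏ u ∈ (Finset.univ.filter
          (fun u : Fin N => (u : ℕ) + 1 ≤ v)).erase l, FF1 N l u)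
          = ∏ u ∈ (Finset.univ.filter
          (fun u : Fin N => (u : ℕ) + 1 ≤ v)).erase l, FF1 N l u := by
        rw [map_prod]
        apply Finset.prod_congr rfl
        intro u hu
        have huv : (u : ℕ) + 1 ≤ v := by
          have := Finset.mem_filter.mp (Finset.mem_of_mem_erase hu); omega
        have huV : u ≠ V := by intro h; rw [h] at huv; omega
        have huk : u ≠ k := by intro h; rw [h] at huv; omega
        rw [map_FF1 _ (hs V k).1, hσxl, (hs V k).2.2.2 u huV huk, FF1_def]
      rw [hσf, hσxl, hσF1V, hσprod, Gterm]
      ring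
    · -- diagonal part
      rw [Finset.erase_insert hVnot]
      rw [show s V V = RingHom.id (RatFld N) from swap_self hs V, RingHom.id_apply]
      rw [map_mul, map_mul, map_zpow₀]
      have hσf : s V k f = f := by
        apply bisymm_swap hs hf
        constructor <;> (intro h; rw [hVval] at *; omega)
      have hσprod : s V k (∏ u ∈ Finset.univ.filter
          (fun u : Fin N => (u : ℕ) + 1 ≤ v), FF1 N V u)
          = ∏ u ∈ Finset.univ.filter
          (fun u : Fin N => (u : ℕ) + 1 ≤ v), FF1 N k u := by
        rw [map_prod]
        apply Finset.prod_congr rfl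
        intro u hu
        have huv : (u : ℕ) + 1 ≤ v := by
          have := Finset.mem_filter.mp hu; omega
        have huV : u ≠ V := by intro h; rw [h] at huv; omega
        have huk : u ≠ k := by intro h; rw [h] at huv; omega
        rw [map_FF1 _ (hs V k).1, (hs V k).2.1, (hs V k).2.2.2 u huV huk, FF1_def]
      rw [hσf, hσprod, (hs V k).2.1, D1term]
      ring
  · -- v = N : both sides vanish
    rw [eOp, dif_neg (by omega)]
    have hempty : Finset.univ.filter (fun k : Fin N => v + 1 ≤ (k : ℕ) + 1)
        = (∅ : Finset (Fin N)) := by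
      ext k
      simp only [Finset.mem_filter, Finset.mem_univ, true_and,
        Finset.notMem_empty, iff_false]
      have := k.isLt
      omega
    rw [hempty, Finset.sum_empty]

lemma claim2 (N : ℕ) (s : Fin N → Fin N → (RatFld N →+* RatFld N))
    (hs : ∀ a b : Fin N, IsSwap N a b (s a b)) (v : ℕ) (hv : v ≤ N) (r t : ℤ)
    (f : RatFld N) (hf : Bisymm N v f) :
    fOp N s v t (eOp N s v r f)
      = ∑ l ∈ Finset.univ.filter (fun l : Fin N => (l : ℕ) + 1 ≤ v),
          ((∑ k ∈ Finset.univ.filter (fun k : Fin N => v + 1 ≤ (k : ℕ) + 1),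
            Gterm N s v r t f l k) + D2term N v r t f l) := by
  by_cases hv1 : 1 ≤ v
  · have hWlt : v - 1 < N := by omega
    set W : Fin N := ⟨v - 1, hWlt⟩ with hWdef
    have hWval : (W : ℕ) = v - 1 := rfl
    have hWnot : W ∉ Finset.univ.filter (fun p : Fin N => v + 1 ≤ (p : ℕ) + 1) := by
      simp only [Finset.mem_filter, Finset.mem_univ, true_and, hWval]
      omega
    have hQins : Finset.univ.filter (fun k : Fin N => v ≤ (k : ℕ) + 1)
        = insert W (Finset.univ.filter (fun k : Fin N => v + 1 ≤ (k : ℕ) + 1)) := by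
      ext m
      simp only [Finset.mem_filter, Finset.mem_univ, true_and, Finset.mem_insert,
        Fin.ext_iff, hWval]
      omega
    rw [fOp, dif_pos ⟨hv1, hv⟩, eOp, dif_pos ⟨hv1, hv⟩]
    simp only [FF1_def, FF2_def]
    rw [hQins]
    apply Finset.sum_congr rfl
    intro l hl
    have hlv : (l : ℕ) + 1 ≤ v := by
      have := Finset.mem_filter.mp hl; omega
    have hlW : l ≠ W ∨ l = W := by tauto
    rw [map_sum, Finset.sum_insert hWnot, add_mul, add_mul, Finset.sum_mul,
      Finset.sum_mul, add_comm]
    congr 1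
    · -- off-diagonal part
      apply Finset.sum_congr rfl
      intro k hk
      have hkv : v ≤ (k : ℕ) := by
        have := Finset.mem_filter.mp hk; omega
      have hkW : k ≠ W := by
        intro h
        have : (k : ℕ) = v - 1 := by rw [h, hWval]
        omega
      have hlk : l ≠ k := by
        intro h; rw [h] at hlv; omega
      have hWnotset : W ∉ (Finset.univ.filter
          (fun p : Fin N => v + 1 ≤ (p : ℕ) + 1)).erase k := by
        intro h; exact hWnot (Finset.mem_of_mem_erase h)
      rw [Finset.erase_insert_of_ne hkW.symm, Finset.prod_insert hWnotset,
        map_mul, map_mul, map_zpow₀, map_mul]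
      have hσf : s l W (s W k f) = s l k f :=
        offdiag2 hs hf l W k hlv (by rw [hWval]; omega) hkv
      have hσxk : s l W (xx N k) = xx N k := (hs l W).2.2.2 k hlk.symm hkW
      have hσF2W : s l W (FF2 N k W) = FF2 N k l := by
        rw [map_FF2 _ (hs l W).1, hσxk, (hs l W).2.2.1, FF2_def]
      have hσprod : s l W (∏ p ∈ (Finset.univ.filter
          (fun p : Fin N => v + 1 ≤ (p : ℕ) + 1)).erase k, FF2 N k p)
          = ∏ p ∈ (Finset.univ.filter
          (fun p : Fin N => v + 1 ≤ (p : ℕ) + 1)).erase k, FF2 N k p := by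
        rw [map_prod]
        apply Finset.prod_congr rfl
        intro p hp
        have hpv : v + 1 ≤ (p : ℕ) + 1 := by
          have := Finset.mem_filter.mp (Finset.mem_of_mem_erase hp); omega
        have hpl : p ≠ l := by intro h; rw [h] at hpv; omega
        have hpW : p ≠ W := by
          intro h
          have : (p : ℕ) = v - 1 := by rw [h, hWval]
          omega
        rw [map_FF2 _ (hs l W).1, hσxk, (hs l W).2.2.2 p hpl hpW, FF2_def]
      rw [hσf, hσxk, hσF2W, hσprod, Gterm,
        show FF2 N k l = FF1 N l k from (FF1_eq_FF2 N l k).symm]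
      ring
    · -- diagonal part
      rw [Finset.erase_insert hWnot]
      rw [show s W W = RingHom.id (RatFld N) from swap_self hs W, RingHom.id_apply]
      rw [map_mul, map_mul, map_zpow₀]
      have hσf : s l W f = f := by
        apply bisymm_swap hs hf
        constructor <;> (intro h; rw [hWval] at *; omega)
      have hσxW : s l W (xx N W) = xx N l := (hs l W).2.2.1
      have hσprod : s l W (∏ p ∈ Finset.univ.filter
          (fun p : Fin N => v + 1 ≤ (p : ℕ) + 1), FF2 N W p)
          = ∏ p ∈ Finset.univ.filter
          (fun p : Fin N => v + 1 ≤ (p : ℕ) + 1), FF2 N l p := by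
        rw [map_prod]
        apply Finset.prod_congr rfl
        intro p hp
        have hpv : v + 1 ≤ (p : ℕ) + 1 := by
          have := Finset.mem_filter.mp hp; omega
        have hpl : p ≠ l := by intro h; rw [h] at hpv; omega
        have hpW : p ≠ W := by
          intro h
          have : (p : ℕ) = v - 1 := by rw [h, hWval]
          omega
        rw [map_FF2 _ (hs l W).1, hσxW, (hs l W).2.2.2 p hpl hpW, FF2_def]
      rw [hσf, hσxW, hσprod, D2term]
      ring
  · -- v = 0 : both sides vanish
    rw [fOp, dif_neg (by omega)]
    have hempty : Finset.univ.filter (fun l : Fin N => (l : ℕ) + 1 ≤ v)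
        = (∅ : Finset (Fin N)) := by
      ext l
      simp only [Finset.mem_filter, Finset.mem_univ, true_and,
        Finset.notMem_empty, iff_false]
      omega
    rw [hempty, Finset.sum_empty]

lemma cancel_aux1 {K : Type*} [Field K] (c X A P1 P2 Q1 Q2 F : K) (hc : c ≠ 0) :
    c⁻¹ * (A * (P1 * (c * X * P2)) / (Q1 * Q2)) * F
      = F * (A * X * (P1 / Q1) * (P2 / Q2)) := by
  rw [div_eq_mul_inv, div_eq_mul_inv, div_eq_mul_inv, mul_inv]
  have h1 : c⁻¹ * c = 1 := inv_mul_cancel₀ hc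
  linear_combination (A * X * P1 * Q1⁻¹ * P2 * Q2⁻¹ * F) * h1

lemma cancel_aux2 {K : Type*} [Field K] (c X A P1 P2 Q1 Q2 F : K) (hc : c ≠ 0) :
    c⁻¹ * (A * (-(c * X) * P1 * P2) / (Q1 * Q2)) * F
      = -(F * (A * X * (P1 / Q1) * (P2 / Q2))) := by
  rw [div_eq_mul_inv, div_eq_mul_inv, div_eq_mul_inv, mul_inv]
  have h1 : c⁻¹ * c = 1 := inv_mul_cancel₀ hc
  linear_combination (-(A * X * P1 * Q1⁻¹ * P2 * Q2⁻¹ * F)) * h1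

lemma zpow_merge {K : Type*} [Field K] (X : K) (hX : X ≠ 0) (r t : ℤ) (N : ℕ) :
    X ^ (t + (N : ℤ)) * X ^ (r - (N : ℤ)) = X ^ (r + t - 1) * X := by
  calc X ^ (t + (N : ℤ)) * X ^ (r - (N : ℤ))
      = X ^ ((r + t - 1) + 1) := by rw [← zpow_add₀ hX]; congr 1; ring
    _ = X ^ (r + t - 1) * X := by rw [zpow_add₀ hX, zpow_one]

lemma claim3 (N : ℕ) (v : ℕ) (hv : v ≤ N) (r t : ℤ) (f : RatFld N) :
    (qq N - (qq N)⁻¹)⁻¹ *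
        (∑ m : Fin N, xx N m ^ (r + t - 1) * bPoly N v (xx N m) /
          ∏ n ∈ Finset.univ.erase m, (xx N m - xx N n)) * f
      = (∑ k ∈ Finset.univ.filter (fun k : Fin N => v + 1 ≤ (k : ℕ) + 1),
          D1term N v r t f k)
        - ∑ l ∈ Finset.univ.filter (fun l : Fin N => (l : ℕ) + 1 ≤ v),
          D2term N v r t f l := by
  have hc := q_sub_qinv_ne_zero N
  rw [Finset.mul_sum, Finset.sum_mul]
  rw [← Finset.sum_filter_add_sum_filter_not Finset.univ
    (fun m : Fin N => v + 1 ≤ (m : ℕ) + 1)]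
  have hBO : Finset.univ.filter (fun m : Fin N => ¬(v + 1 ≤ (m : ℕ) + 1))
      = Finset.univ.filter (fun l : Fin N => (l : ℕ) + 1 ≤ v) := by
    ext m; simp only [Finset.mem_filter, Finset.mem_univ, true_and]; omega
  rw [hBO]
  have h1 : ∑ m ∈ Finset.univ.filter (fun m : Fin N => v + 1 ≤ (m : ℕ) + 1),
      (qq N - (qq N)⁻¹)⁻¹ * (xx N m ^ (r + t - 1) * bPoly N v (xx N m) /
        ∏ n ∈ Finset.univ.erase m, (xx N m - xx N n)) * f
      = ∑ k ∈ Finset.univ.filter (fun k : Fin N => v + 1 ≤ (k : ℕ) + 1),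
        D1term N v r t f k := by
    apply Finset.sum_congr rfl
    intro m hm
    have hmv : v ≤ (m : ℕ) := by
      have := Finset.mem_filter.mp hm; omega
    have hmB2 : m ∈ Finset.univ.filter (fun p : Fin N => v + 1 ≤ (p : ℕ) + 1) := by
      simp only [Finset.mem_filter, Finset.mem_univ, true_and]; omega
    have hsplit : Finset.univ.erase m
        = (Finset.univ.filter (fun u : Fin N => (u : ℕ) + 1 ≤ v))
          ∪ (Finset.univ.filter (fun p : Fin N => v + 1 ≤ (p : ℕ) + 1)).erase m := by
      ext n
      simp only [Finset.mem_erase, Finset.mem_univ, and_true, Finset.mem_union,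
        Finset.mem_filter, true_and, Fin.ext_iff]
      omega
    have hdisj : Disjoint (Finset.univ.filter (fun u : Fin N => (u : ℕ) + 1 ≤ v))
        ((Finset.univ.filter (fun p : Fin N => v + 1 ≤ (p : ℕ) + 1)).erase m) := by
      rw [Finset.disjoint_left]
      intro a ha hb
      have h1 := (Finset.mem_filter.mp ha).2
      have h2 := (Finset.mem_filter.mp (Finset.mem_of_mem_erase hb)).2
      omega
    rw [bPoly, D1term]
    simp only [FF1, FF2]
    rw [Finset.prod_div_distrib, Finset.prod_div_distrib]
    rw [hsplit, Finset.prod_union hdisj, ← Finset.mul_prod_erase _ _ hmB2]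
    rw [show qq N * xx N m - (qq N)⁻¹ * xx N m
      = (qq N - (qq N)⁻¹) * xx N m from by ring]
    rw [zpow_merge (xx N m) (xx_ne_zero N m) r t N]
    exact cancel_aux1 _ _ _ _ _ _ _ _ hc
  have h2 : ∑ m ∈ Finset.univ.filter (fun l : Fin N => (l : ℕ) + 1 ≤ v),
      (qq N - (qq N)⁻¹)⁻¹ * (xx N m ^ (r + t - 1) * bPoly N v (xx N m) /
        ∏ n ∈ Finset.univ.erase m, (xx N m - xx N n)) * f
      = -∑ l ∈ Finset.univ.filter (fun l : Fin N => (l : ℕ) + 1 ≤ v),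
        D2term N v r t f l := by
    rw [← Finset.sum_neg_distrib]
    apply Finset.sum_congr rfl
    intro m hm
    have hmv : (m : ℕ) + 1 ≤ v := by
      have := Finset.mem_filter.mp hm; omega
    have hmB1 : m ∈ Finset.univ.filter (fun u : Fin N => (u : ℕ) + 1 ≤ v) := by
      simp only [Finset.mem_filter, Finset.mem_univ, true_and]; omega
    have hsplit : Finset.univ.erase m
        = (Finset.univ.filter (fun u : Fin N => (u : ℕ) + 1 ≤ v)).erase m
          ∪ Finset.univ.filter (fun p : Fin N => v + 1 ≤ (p : ℕ) + 1) := by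
      ext n
      simp only [Finset.mem_erase, Finset.mem_univ, and_true, Finset.mem_union,
        Finset.mem_filter, true_and, Fin.ext_iff]
      omega
    have hdisj : Disjoint
        ((Finset.univ.filter (fun u : Fin N => (u : ℕ) + 1 ≤ v)).erase m)
        (Finset.univ.filter (fun p : Fin N => v + 1 ≤ (p : ℕ) + 1)) := by
      rw [Finset.disjoint_left]
      intro a ha hb
      have h1 := (Finset.mem_filter.mp (Finset.mem_of_mem_erase ha)).2
      have h2 := (Finset.mem_filter.mp hb).2
      omega
    rw [bPoly, D2term]
    simp only [FF1, FF2]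
    rw [Finset.prod_div_distrib, Finset.prod_div_distrib]
    rw [hsplit, Finset.prod_union hdisj, ← Finset.mul_prod_erase _ _ hmB1]
    rw [show (qq N)⁻¹ * xx N m - qq N * xx N m
      = -((qq N - (qq N)⁻¹) * xx N m) from by ring]
    rw [zpow_merge (xx N m) (xx_ne_zero N m) r t N]
    exact cancel_aux2 _ _ _ _ _ _ _ _ hc
  rw [h1, h2, ← sub_eq_add_neg]

/-- For every `0 ≤ v ≤ N`, all `r, s ∈ ℤ` and every `v`-bisymmetric
`f`, one has `e_{v+1,r}(f_{v+1,s}(f)) − f_{v,s}(e_{v,r}(f)) =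
(q − q⁻¹)⁻¹ · (Σ_{m=1}^{N} x_m^{r+s−1} B_v(x_m) / ∏_{n≠m} (x_m − x_n)) · f`
(the Drinfel'd relation `[x⁺(z), x⁻(w)]` on the equivariant K-theory of cotangent
bundles of Grassmannians). -/
theorem statement14 (N : ℕ) (hN : 1 ≤ N)
    (s : Fin N → Fin N → (RatFld N →+* RatFld N))
    (hs : ∀ a b : Fin N, IsSwap N a b (s a b))
    (v : ℕ) (hv : v ≤ N) (r t : ℤ) (f : RatFld N) (hf : Bisymm N v f) :
    eOp N s (v + 1) r (fOp N s (v + 1) t f) - fOp N s v t (eOp N s v r f)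
      = (qq N - (qq N)⁻¹)⁻¹ *
        (∑ m : Fin N, xx N m ^ (r + t - 1) * bPoly N v (xx N m) /
          ∏ n ∈ Finset.univ.erase m, (xx N m - xx N n)) * f := by
  rw [claim1 N s hs v hv r t f hf, claim2 N s hs v hv r t f hf, claim3 N v hv r t f]
  rw [Finset.sum_add_distrib, Finset.sum_add_distrib, Finset.sum_comm]
  abel
end
end

section
/- For every v with 1 ≤ v ≤ N, all r, s ∈ ℤ, and every v-bisymmetric f ∈ K, one has e_{v-1,r+1}(e_{v,s}(f)) − q²·e_{v-1,r}(e_{v,s+1}(f)) = q²·e_{v-1,s}(e_{v,r+1}(f)) − e_{v-1,s+1}(e_{v,r}(f)). (This is the Drinfel'd relation (z − q²w)·x^+(z)x^+(w) = (q²z − w)·x^+(w)x^+(z), verified on the equivariant K-theory of the quiver variety of type A₁.) -/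
noncomputable section

theorem hom_ext {N : ℕ} (σ τ : RatFld N →+* RatFld N) (hq : σ (qq N) = τ (qq N))
    (hx : ∀ m, σ (xx N m) = τ (xx N m)) : σ = τ := by
  apply IsLocalization.ringHom_ext (nonZeroDivisors (MvPolynomial (Option (Fin N)) ℚ))
  apply MvPolynomial.ringHom_ext
  · intro r
    have : (σ.comp (algebraMap (MvPolynomial (Option (Fin N)) ℚ) (RatFld N))).comp (algebraMap ℚ _) = (τ.comp (algebraMap (MvPolynomial (Option (Fin N)) ℚ) (RatFld N))).comp (algebraMap ℚ _) := Subsingleton.elim _ _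
    exact RingHom.congr_fun this r
  · intro n
    match n with
    | none => exact hq
    | some m => exact hx m

def PiHom {N : ℕ} (π : Equiv.Perm (Fin N)) : RatFld N →+* RatFld N :=
  IsFractionRing.lift (g := (algebraMap (MvPolynomial (Option (Fin N)) ℚ) (RatFld N)).comp
      (MvPolynomial.rename (Equiv.optionCongr π)).toRingHom)
    ((IsFractionRing.injective (MvPolynomial (Option (Fin N)) ℚ) (RatFld N)).comp
      (MvPolynomial.rename_injective _ (Equiv.injective _)))

theorem PiHom_q {N : ℕ} (π : Equiv.Perm (Fin N)) : PiHom π (qq N) = qq N := by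
  unfold PiHom qq
  rw [IsFractionRing.lift_algebraMap]
  simp [MvPolynomial.rename_X]

theorem PiHom_x {N : ℕ} (π : Equiv.Perm (Fin N)) (m : Fin N) :
    PiHom π (xx N m) = xx N (π m) := by
  unfold PiHom xx
  rw [IsFractionRing.lift_algebraMap]
  simp [MvPolynomial.rename_X]

theorem PiHom_comp {N : ℕ} (π ρ : Equiv.Perm (Fin N)) :
    (PiHom π).comp (PiHom ρ) = PiHom (π * ρ) := by
  apply hom_ext <;> simp [PiHom_q, PiHom_x]

theorem PiHom_PiHom {N : ℕ} (π ρ : Equiv.Perm (Fin N)) (g : RatFld N) :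
    PiHom π (PiHom ρ g) = PiHom (π * ρ) g := by
  rw [← PiHom_comp]; rfl

/-- the index set `{k : v ≤ k+1}` (1-based indices `v..N`). -/
def Sv (N v : ℕ) : Finset (Fin N) := Finset.univ.filter (fun k : Fin N => v ≤ (k : ℕ) + 1)

def phi (N : ℕ) (i t : Fin N) : RatFld N :=
  (qq N * xx N i - (qq N)⁻¹ * xx N t) / (xx N i - xx N t)

theorem eOp_apply (N : ℕ) (s : Fin N → Fin N → (RatFld N →+* RatFld N)) (v : ℕ) (r : ℤ)
    (f : RatFld N) (h1 : 1 ≤ v) (h2 : v ≤ N) (u : Fin N) (hu : (u : ℕ) = v - 1) :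
    eOp N s v r f = ∑ k ∈ Sv N v, s u k f * xx N k ^ (r - (N : ℤ)) *
      ∏ t ∈ (Sv N v).erase k, phi N k t := by
  have hmk : ∀ pf : v - 1 < N, (⟨v - 1, pf⟩ : Fin N) = u := fun pf => Fin.ext (by simp [hu])
  simp only [eOp, dif_pos (⟨h1, h2⟩ : 1 ≤ v ∧ v ≤ N), hmk, Sv, phi]

theorem perm1' {n : ℕ} (p w l : Fin n) (hpw : p ≠ w) (hlp : l ≠ p) :
    Equiv.swap p l * Equiv.swap w l = Equiv.swap w l * Equiv.swap p w := by
  ext m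
  simp only [Equiv.Perm.mul_apply, Equiv.swap_apply_def]
  split_ifs <;> simp_all
theorem perm2' {n : ℕ} (p w i j : Fin n) (hpw : p ≠ w) (hip : i ≠ p) (hiw : i ≠ w)
    (hjp : j ≠ p) (hjw : j ≠ w) (hij : i ≠ j) :
    Equiv.swap p i * Equiv.swap w j
      = (Equiv.swap p j * Equiv.swap w i) * (Equiv.swap p w * Equiv.swap i j) := by
  ext m
  rcases eq_or_ne m p with rfl | hmp
  · simp [Equiv.Perm.mul_apply, Equiv.swap_apply_def, hpw, hip, hjp, hij,
      hpw.symm, hip.symm, hjp.symm, hiw, hjw, hij.symm]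
  rcases eq_or_ne m w with rfl | hmw
  · simp [Equiv.Perm.mul_apply, Equiv.swap_apply_def, hpw, hip, hjp, hij,
      hpw.symm, hip.symm, hjp.symm, hiw, hjw, hij.symm, hiw.symm, hjw.symm]
  rcases eq_or_ne m i with rfl | hmi
  · simp [Equiv.Perm.mul_apply, Equiv.swap_apply_def, hpw, hip, hjp, hij,
      hpw.symm, hip.symm, hjp.symm, hiw, hjw, hij.symm, hiw.symm, hjw.symm]
  rcases eq_or_ne m j with rfl | hmj
  · simp [Equiv.Perm.mul_apply, Equiv.swap_apply_def, hpw, hip, hjp, hij,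
      hpw.symm, hip.symm, hjp.symm, hiw, hjw, hij.symm, hiw.symm, hjw.symm]
  · simp [Equiv.Perm.mul_apply, Equiv.swap_apply_def, hmp, hmw, hmi, hmj]
theorem perm3' {n : ℕ} (p w j : Fin n) (hpw : p ≠ w) (hjp : j ≠ p) (hjw : j ≠ w) :
    Equiv.swap p w * Equiv.swap w j = Equiv.swap p j * Equiv.swap p w := by
  ext m
  simp only [Equiv.Perm.mul_apply, Equiv.swap_apply_def]
  split_ifs <;> simp_all

theorem double_sum_cancel {K : Type*} [Field K] [CharZero K] {α : Type*} [DecidableEq α]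
    (S : Finset α) (F : α → α → K)
    (hF : ∀ i ∈ S, ∀ j ∈ S, i ≠ j → F i j + F j i = 0) :
    ∑ i ∈ S, ∑ j ∈ S.erase i, F i j = 0 := by
  have h1 : ∀ i ∈ S, ∑ j ∈ S.erase i, F i j = ∑ j ∈ S, if j ≠ i then F i j else 0 := by
    intro i _
    rw [← Finset.filter_ne' S i, Finset.sum_filter]
  rw [Finset.sum_congr rfl h1]
  have h2 : (∑ i ∈ S, ∑ j ∈ S, if j ≠ i then F i j else 0)
      + (∑ i ∈ S, ∑ j ∈ S, if j ≠ i then F i j else 0) = 0 := by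
    have hcomm : (∑ i ∈ S, ∑ j ∈ S, if j ≠ i then F i j else 0)
        = ∑ i ∈ S, ∑ j ∈ S, if i ≠ j then F j i else 0 := Finset.sum_comm
    nth_rewrite 2 [hcomm]
    rw [← Finset.sum_add_distrib]
    apply Finset.sum_eq_zero
    intro i hi
    rw [← Finset.sum_add_distrib]
    apply Finset.sum_eq_zero
    intro j hj
    by_cases hij : j = i
    · subst hij; simp
    · rw [if_pos hij, if_pos (Ne.symm hij)]
      exact hF i hi j hj (Ne.symm hij)
  have h3 : (2 : K) * (∑ i ∈ S, ∑ j ∈ S, if j ≠ i then F i j else 0) = 0 := by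
    rw [two_mul]; exact h2
  rcases mul_eq_zero.mp h3 with h | h
  · exact absurd h two_ne_zero
  · exact h

set_option maxHeartbeats 3000000 in
/-- For every `1 ≤ v ≤ N`, all `r, s ∈ ℤ` and every `v`-bisymmetric
`f`, one has `e_{v−1,r+1}(e_{v,s}(f)) − q²·e_{v−1,r}(e_{v,s+1}(f)) =
q²·e_{v−1,s}(e_{v,r+1}(f)) − e_{v−1,s+1}(e_{v,r}(f))`
(the Drinfel'd relation `(z − q²w)x⁺(z)x⁺(w) = (q²z − w)x⁺(w)x⁺(z)` on the equivariant
K-theory of the quiver variety of type `A₁`). -/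
theorem statement15 (N : ℕ) (hN : 1 ≤ N)
    (s : Fin N → Fin N → (RatFld N →+* RatFld N))
    (hs : ∀ a b : Fin N, IsSwap N a b (s a b))
    (v : ℕ) (hv1 : 1 ≤ v) (hv : v ≤ N) (r t : ℤ) (f : RatFld N)
    (hf : Bisymm N v f) :
    eOp N s (v - 1) (r + 1) (eOp N s v t f)
        - (qq N) ^ 2 * eOp N s (v - 1) r (eOp N s v (t + 1) f)
      = (qq N) ^ 2 * eOp N s (v - 1) t (eOp N s v (r + 1) f)
        - eOp N s (v - 1) (t + 1) (eOp N s v r f) := by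
  by_cases hv2 : 2 ≤ v
  swap
  · -- v = 1 : both sides vanish
    have hv1' : v = 1 := by omega
    subst hv1'
    simp only [Nat.sub_self, eOp]
    norm_num
  -- main case
  set p : Fin N := ⟨v - 2, by omega⟩ with hpdef
  set w : Fin N := ⟨v - 1, by omega⟩ with hwdef
  have hpv : (p : ℕ) = v - 2 := rfl
  have hwv : (w : ℕ) = v - 1 := rfl
  have hpw : p ≠ w := by simp [Fin.ext_iff, hpv, hwv]; omega
  -- each s a b is the canonical swap
  have hsw : ∀ a b : Fin N, s a b = PiHom (Equiv.swap a b) := by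
    intro a b
    obtain ⟨h1, h2, h3, h4⟩ := hs a b
    apply hom_ext
    · rw [h1, PiHom_q]
    · intro m
      rw [PiHom_x]
      rcases eq_or_ne m a with rfl | hma
      · rw [h2, Equiv.swap_apply_left]
      rcases eq_or_ne m b with rfl | hmb
      · rw [h3, Equiv.swap_apply_right]
      · rw [h4 m hma hmb, Equiv.swap_apply_of_ne_of_ne hma hmb]
  have hfPi : ∀ π : Equiv.Perm (Fin N),
      (∀ m : Fin N, ((m : ℕ) + 1 ≤ v ↔ ((π m : ℕ) + 1 ≤ v))) → PiHom π f = f :=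
    fun π h => hf _ (PiHom_q π) ⟨π, h, fun m => PiHom_x π m⟩
  have hmaster : ∀ π1 π2 : Equiv.Perm (Fin N),
      (∀ m : Fin N, ((m : ℕ) + 1 ≤ v ↔ (((π2⁻¹ * π1) m : ℕ) + 1 ≤ v)) ) →
      PiHom π1 f = PiHom π2 f := by
    intro π1 π2 h
    have h2 : PiHom π2 (PiHom (π2⁻¹ * π1) f) = PiHom π1 f := by
      rw [PiHom_PiHom]
      congr 1
      group
    rw [← h2, hfPi _ h]
  -- block-preserving permutations fix f
  have hfPW : PiHom (Equiv.swap p w) f = f := by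
    apply hfPi
    intro m
    rcases eq_or_ne m p with rfl | hmp
    · rw [Equiv.swap_apply_left]
      simp only [hpv, hwv]; omega
    rcases eq_or_ne m w with rfl | hmw
    · rw [Equiv.swap_apply_right]
      simp only [hpv, hwv]; omega
    · rw [Equiv.swap_apply_of_ne_of_ne hmp hmw]
  have hfPWIJ : ∀ i j : Fin N, v ≤ (i : ℕ) + 1 → v ≤ (j : ℕ) + 1 → i ≠ w → j ≠ w →
      PiHom (Equiv.swap p w * Equiv.swap i j) f = f := by
    intro i j hi hj hiw hjw
    rw [← PiHom_PiHom]
    have hij2 : PiHom (Equiv.swap i j) f = f := by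
      apply hfPi
      intro m
      rcases eq_or_ne m i with rfl | hmi
      · rw [Equiv.swap_apply_left]
        have := hiw; have := hjw
        have h1 := Fin.val_ne_of_ne hiw; have h2 := Fin.val_ne_of_ne hjw
        constructor <;> intro <;> omega
      rcases eq_or_ne m j with rfl | hmj
      · rw [Equiv.swap_apply_right]
        have h1 := Fin.val_ne_of_ne hiw; have h2 := Fin.val_ne_of_ne hjw
        constructor <;> intro <;> omega
      · rw [Equiv.swap_apply_of_ne_of_ne hmi hmj]
    rw [hij2, hfPW]
  -- the symmetric family G
  set G : Fin N → Fin N → RatFld N :=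
    fun i j => s p i (s w (if j = p then i else j) f) with hGdef
  have hGPi : ∀ i j : Fin N,
      G i j = PiHom (Equiv.swap p i * Equiv.swap w (if j = p then i else j)) f := by
    intro i j
    rw [hGdef]
    simp only [hsw, PiHom_PiHom]
  -- permutation identities
  have perm1 : ∀ l : Fin N, l ≠ p →
      Equiv.swap p l * Equiv.swap w l = Equiv.swap w l * Equiv.swap p w :=
    fun l hlp => perm1' p w l hpw hlp
  have perm2 : ∀ i j : Fin N, i ≠ p → i ≠ w → j ≠ p → j ≠ w → i ≠ j →
      Equiv.swap p i * Equiv.swap w j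
        = (Equiv.swap p j * Equiv.swap w i) * (Equiv.swap p w * Equiv.swap i j) :=
    fun i j a b c d e => perm2' p w i j hpw a b c d e
  have perm3 : ∀ j : Fin N, j ≠ p → j ≠ w →
      Equiv.swap p w * Equiv.swap w j = Equiv.swap p j * Equiv.swap p w :=
    fun j a b => perm3' p w j hpw a b
  -- key computations with PiHom
  have hPswapf : ∀ l : Fin N, l ≠ p → l ≠ w → v - 2 ≤ (l : ℕ) →
      PiHom (Equiv.swap p w * Equiv.swap w l) f = PiHom (Equiv.swap p l) f := by
    intro l hlp hlw hl
    rw [perm3 l hlp hlw, ← PiHom_PiHom, hfPW]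
  have hGsym : ∀ i j : Fin N, i ≠ j → v - 2 ≤ (i : ℕ) → v - 2 ≤ (j : ℕ) →
      G i j = G j i := by
    have base : ∀ l : Fin N, l ≠ p → v - 2 ≤ (l : ℕ) → G l p = G p l := by
      -- G l p = s p l (s w l f), G p l = s p p (s w l f) = s w l f
      intro l hlp hl
      have hspp : s p p = RingHom.id _ := by
        obtain ⟨h1, h2, h3, h4⟩ := hs p p
        apply hom_ext
        · rw [h1]; rfl
        · intro m
          rcases eq_or_ne m p with rfl | hmp
          · rw [h2]; rfl
          · rw [h4 m hmp hmp]; rfl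
      have e1 : G l p = PiHom (Equiv.swap p l * Equiv.swap w l) f := by
        rw [hGPi]; simp [hlp]
      have e2 : G p l = PiHom (Equiv.swap w l) f := by
        rw [hGdef]
        simp only [hspp, hsw]
        have hlp' : ¬ (l = p) := hlp
        rw [if_neg hlp']
        rfl
      rw [e1, e2, perm1 l hlp, ← PiHom_PiHom, hfPW]
    intro i j hij hi hj
    rcases eq_or_ne i p with rfl | hip
    · exact (base j (Ne.symm hij) hj).symm
    rcases eq_or_ne j p with rfl | hjp
    · exact base i hij hi
    -- now i, j ≠ p
    have e1 : G i j = PiHom (Equiv.swap p i * Equiv.swap w j) f := by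
      rw [hGPi, if_neg hjp]
    have e2 : G j i = PiHom (Equiv.swap p j * Equiv.swap w i) f := by
      rw [hGPi, if_neg hip]
    have hww : Equiv.swap w w = 1 := by rw [Equiv.swap_self]; rfl
    rcases eq_or_ne i w with rfl | hiw
    · -- G w j = PiHom (swap p w * swap w j) f = PiHom (swap p j) f
      rw [e1, e2, hww, mul_one, hPswapf j hjp (Ne.symm hij) hj]
    rcases eq_or_ne j w with rfl | hjw
    · rw [e1, e2, hww, mul_one, hPswapf i hip hiw hi]
    · -- generic case
      rw [e1, e2, perm2 i j hip hiw hjp hjw hij, ← PiHom_PiHom]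
      have hi' : v ≤ (i:ℕ) + 1 := by
        have h1 : (i:ℕ) ≠ v - 2 := fun h => hip (Fin.ext (h.trans hpv.symm))
        have h2 : (i:ℕ) ≠ v - 1 := fun h => hiw (Fin.ext (h.trans hwv.symm))
        omega
      have hj' : v ≤ (j:ℕ) + 1 := by
        have h1 : (j:ℕ) ≠ v - 2 := fun h => hjp (Fin.ext (h.trans hpv.symm))
        have h2 : (j:ℕ) ≠ v - 1 := fun h => hjw (Fin.ext (h.trans hwv.symm))
        omega
      rw [hfPWIJ i j hi' hj' hiw hjw]
  -- basic nonvanishing facts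
  have halg := IsFractionRing.injective (MvPolynomial (Option (Fin N)) ℚ) (RatFld N)
  have hq0 : qq N ≠ 0 := by
    rw [qq, Ne, ← map_zero (algebraMap (MvPolynomial (Option (Fin N)) ℚ) (RatFld N))]
    exact fun h => MvPolynomial.X_ne_zero _ (halg h)
  have hx0 : ∀ m : Fin N, xx N m ≠ 0 := by
    intro m
    rw [xx, Ne, ← map_zero (algebraMap (MvPolynomial (Option (Fin N)) ℚ) (RatFld N))]
    exact fun h => MvPolynomial.X_ne_zero _ (halg h)
  have hxne : ∀ i j : Fin N, i ≠ j → xx N i - xx N j ≠ 0 := by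
    intro i j hij
    rw [sub_ne_zero, xx, xx]
    intro h
    exact hij (by simpa [MvPolynomial.X_injective.eq_iff] using halg h)
  -- swap action on generators
  have hsq : ∀ a b : Fin N, s a b (qq N) = qq N := fun a b => (hs a b).1
  have hsx : ∀ a b m : Fin N, s a b (xx N m) = xx N (Equiv.swap a b m) := by
    intro a b m
    rw [hsw, PiHom_x]
  have hsphi : ∀ a b i u : Fin N,
      s a b (phi N i u) = phi N (Equiv.swap a b i) (Equiv.swap a b u) := by
    intro a b i u
    simp only [phi, map_div₀, map_sub, map_mul, map_inv₀, hsq, hsx]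
  -- membership facts
  have hmemS' : ∀ k : Fin N, k ∈ Sv N (v-1) ↔ v - 1 ≤ (k:ℕ) + 1 := by
    intro k; simp [Sv]
  have hmemS : ∀ k : Fin N, k ∈ Sv N v ↔ v ≤ (k:ℕ) + 1 := by
    intro k; simp [Sv]
  have hpS' : p ∈ Sv N (v-1) := by rw [hmemS', hpv]; omega
  have hkSp : ∀ k : Fin N, k ∈ Sv N v → k ≠ p := by
    intro k hk h
    rw [hmemS] at hk
    rw [h, hpv] at hk
    omega
  have hSS' : ∀ k : Fin N, k ∈ Sv N v ↔ (k ∈ Sv N (v-1) ∧ k ≠ p) := by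
    intro k
    rw [hmemS, hmemS', Ne, Fin.ext_iff, hpv]
    omega
  -- THE KEY LEMMA
  have key : ∀ a b : ℤ, eOp N s (v-1) a (eOp N s v b f)
      = ∑ i ∈ Sv N (v-1), ∑ j ∈ (Sv N (v-1)).erase i,
          G i j * xx N i ^ (a - (N:ℤ)) * xx N j ^ (b - (N:ℤ)) *
          (∏ u ∈ (Sv N (v-1)).erase i, phi N i u) *
          (∏ u ∈ ((Sv N (v-1)).erase i).erase j, phi N j u) := by
    intro a b
    rw [eOp_apply N s (v-1) a _ (by omega) (by omega) p (by rw [hpv]; omega)]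
    apply Finset.sum_congr rfl
    intro l hl
    rw [eOp_apply N s v b f (by omega) hv w (by rw [hwv])]
    rw [map_sum, Finset.sum_mul, Finset.sum_mul]
    have hlS' : l ∈ Sv N (v-1) := hl
    apply Finset.sum_nbij' (i := fun k => if k = l then p else k)
      (j := fun u => if u = p then l else u)
    · -- maps into target
      intro k hk
      have hkp := hkSp k hk
      rw [Finset.mem_erase]
      by_cases hkl : k = l
      · subst hkl
        rw [if_pos rfl]
        exact ⟨Ne.symm hkp, hpS'⟩
      · rw [if_neg hkl]
        exact ⟨hkl, ((hSS' k).1 hk).1⟩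
    · -- reverse maps into source
      intro u hu
      rw [Finset.mem_erase] at hu
      obtain ⟨hul, huS'⟩ := hu
      by_cases hup : u = p
      · subst hup
        rw [if_pos rfl, hSS' l]
        exact ⟨hlS', Ne.symm hul⟩
      · rw [if_neg hup, hSS' u]
        exact ⟨huS', hup⟩
    · -- left inv
      intro k hk
      have hkp := hkSp k hk
      by_cases hkl : k = l
      · subst hkl
        simp
      · rw [if_neg hkl, if_neg hkp]
    · -- right inv
      intro u hu
      rw [Finset.mem_erase] at hu
      by_cases hup : u = p
      · subst hup
        simp
      · rw [if_neg hup, if_neg hu.1]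
    · -- the term equality
      intro k hk
      have hkp : k ≠ p := hkSp k hk
      have hkS' : k ∈ Sv N (v-1) := ((hSS' k).1 hk).1
      have c2 : s p l (xx N k) = xx N (if k = l then p else k) := by
        rw [hsx]
        congr 1
        by_cases hkl : k = l
        · subst hkl
          rw [if_pos rfl, Equiv.swap_apply_right]
        · rw [if_neg hkl, Equiv.swap_apply_of_ne_of_ne hkp hkl]
      have c1 : s p l (s w k f) = G l (if k = l then p else k) := by
        simp only [hGdef]
        by_cases hkl : k = l
        · rw [if_pos hkl, if_pos rfl, hkl]
        · rw [if_neg hkl, if_neg hkp]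
      have c3 : s p l (∏ u ∈ (Sv N v).erase k, phi N k u)
          = ∏ u ∈ ((Sv N (v-1)).erase l).erase (if k = l then p else k),
              phi N (if k = l then p else k) u := by
        rw [map_prod]
        apply Finset.prod_nbij' (i := fun u => if u = l then p else u)
          (j := fun u => if u = p then l else u)
        · intro u hu
          obtain ⟨huk, huS⟩ := Finset.mem_erase.1 hu
          have hup : u ≠ p := hkSp u huS
          have huS' : u ∈ Sv N (v-1) := ((hSS' u).1 huS).1
          simp only [Finset.mem_erase]
          by_cases hul : u = l
          · subst hul
            have hkl : k ≠ u := Ne.symm huk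
            rw [if_pos rfl, if_neg hkl]
            exact ⟨Ne.symm hkp, Ne.symm hup, hpS'⟩
          · rw [if_neg hul]
            refine ⟨?_, hul, huS'⟩
            by_cases hkl : k = l
            · rw [if_pos hkl]; exact hup
            · rw [if_neg hkl]; exact huk
        · intro u hu
          simp only [Finset.mem_erase] at hu
          obtain ⟨huj, hul, huS'⟩ := hu
          by_cases hup : u = p
          · subst hup
            rw [if_pos rfl, Finset.mem_erase]
            refine ⟨?_, (hSS' l).2 ⟨hlS', Ne.symm hul⟩⟩
            intro h
            exact huj (by rw [if_pos h.symm])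
          · rw [if_neg hup, Finset.mem_erase]
            refine ⟨?_, (hSS' u).2 ⟨huS', hup⟩⟩
            by_cases hkl : k = l
            · rw [hkl]; exact hul
            · rw [if_neg hkl] at huj; exact huj
        · intro u hu
          obtain ⟨huk, huS⟩ := Finset.mem_erase.1 hu
          have hup : u ≠ p := hkSp u huS
          by_cases hul : u = l
          · subst hul; simp
          · rw [if_neg hul, if_neg hup]
        · intro u hu
          simp only [Finset.mem_erase] at hu
          by_cases hup : u = p
          · subst hup; simp
          · rw [if_neg hup, if_neg hu.2.1]
        · intro u hu
          obtain ⟨huk, huS⟩ := Finset.mem_erase.1 hu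
          have hup : u ≠ p := hkSp u huS
          rw [hsphi]
          congr 1
          · by_cases hkl : k = l
            · subst hkl
              rw [if_pos rfl, Equiv.swap_apply_right]
            · rw [if_neg hkl, Equiv.swap_apply_of_ne_of_ne hkp hkl]
          · by_cases hul : u = l
            · subst hul
              rw [if_pos rfl, Equiv.swap_apply_right]
            · rw [if_neg hul, Equiv.swap_apply_of_ne_of_ne hup hul]
      rw [map_mul, map_mul, c1, map_zpow₀, c2, c3]
      ring
  -- auxiliary algebraic facts for the final cancellation
  haveI : CharZero (RatFld N) := charZero_of_injective_algebraMap
    (algebraMap ℚ (RatFld N)).injective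
  have hz : ∀ (c : ℤ) (m : Fin N),
      xx N m ^ (c + 1 - (N:ℤ)) = xx N m ^ (c - (N:ℤ)) * xx N m := by
    intro c m
    rw [show c + 1 - (N:ℤ) = (c - N) + 1 by ring, zpow_add_one₀ (hx0 m)]
  have hPQ : ∀ i j : Fin N, j ∈ Sv N (v-1) → i ≠ j →
      (∏ u ∈ (Sv N (v-1)).erase i, phi N i u) *
        (∏ u ∈ ((Sv N (v-1)).erase i).erase j, phi N j u)
      = phi N i j * ∏ u ∈ ((Sv N (v-1)).erase i).erase j, (phi N i u * phi N j u) := by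
    intro i j hj hij
    have hjm : j ∈ (Sv N (v-1)).erase i := Finset.mem_erase.2 ⟨Ne.symm hij, hj⟩
    rw [← Finset.mul_prod_erase _ _ hjm, Finset.prod_mul_distrib]
    ring
  have hRR : ∀ i j : Fin N,
      (∏ u ∈ ((Sv N (v-1)).erase j).erase i, (phi N j u * phi N i u))
      = ∏ u ∈ ((Sv N (v-1)).erase i).erase j, (phi N i u * phi N j u) := by
    intro i j
    rw [Finset.erase_right_comm]
    exact Finset.prod_congr rfl fun u _ => mul_comm _ _
  have hbr : ∀ i j : Fin N, i ≠ j →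
      phi N i j * (xx N i - qq N ^ 2 * xx N j)
        + phi N j i * (xx N j - qq N ^ 2 * xx N i) = 0 := by
    intro i j hij
    have h1 := hxne i j hij
    have h2 := hxne j i (Ne.symm hij)
    simp only [phi]
    field_simp
    ring
  -- the antisymmetric summand
  set E : Fin N → Fin N → RatFld N := fun i j =>
    G i j * (∏ u ∈ (Sv N (v-1)).erase i, phi N i u) *
      (∏ u ∈ ((Sv N (v-1)).erase i).erase j, phi N j u) *
      ((xx N i ^ (r - (N:ℤ)) * xx N j ^ (t - (N:ℤ))
        + xx N i ^ (t - (N:ℤ)) * xx N j ^ (r - (N:ℤ))) *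
        (xx N i - qq N ^ 2 * xx N j)) with hEdef
  have main : ∑ i ∈ Sv N (v-1), ∑ j ∈ (Sv N (v-1)).erase i, E i j = 0 := by
    apply double_sum_cancel
    intro i hi j hj hij
    have hi' : v - 2 ≤ (i:ℕ) := by rw [hmemS'] at hi; omega
    have hj' : v - 2 ≤ (j:ℕ) := by rw [hmemS'] at hj; omega
    have e1 := hPQ i j hj hij
    have e2 := hPQ j i hi (Ne.symm hij)
    have e3 := hRR i j
    have e4 := hGsym i j hij hi' hj'
    have e5 := hbr i j hij
    simp only [hEdef]
    linear_combination
      (G j i * (xx N i ^ (r - (N:ℤ)) * xx N j ^ (t - (N:ℤ))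
        + xx N i ^ (t - (N:ℤ)) * xx N j ^ (r - (N:ℤ)))
        * (∏ u ∈ ((Sv N (v-1)).erase i).erase j, (phi N i u * phi N j u))) * e5
      + (G j i * (xx N i ^ (r - (N:ℤ)) * xx N j ^ (t - (N:ℤ))
        + xx N i ^ (t - (N:ℤ)) * xx N j ^ (r - (N:ℤ)))
        * (xx N i - qq N ^ 2 * xx N j)) * e1
      + (G j i * (xx N i ^ (r - (N:ℤ)) * xx N j ^ (t - (N:ℤ))
        + xx N i ^ (t - (N:ℤ)) * xx N j ^ (r - (N:ℤ)))
        * (xx N j - qq N ^ 2 * xx N i)) * e2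
      + (G j i * (xx N i ^ (r - (N:ℤ)) * xx N j ^ (t - (N:ℤ))
        + xx N i ^ (t - (N:ℤ)) * xx N j ^ (r - (N:ℤ)))
        * (xx N j - qq N ^ 2 * xx N i) * phi N j i) * e3
      + ((∏ u ∈ (Sv N (v-1)).erase i, phi N i u) *
          (∏ u ∈ ((Sv N (v-1)).erase i).erase j, phi N j u)
        * (xx N i ^ (r - (N:ℤ)) * xx N j ^ (t - (N:ℤ))
          + xx N i ^ (t - (N:ℤ)) * xx N j ^ (r - (N:ℤ)))
        * (xx N i - qq N ^ 2 * xx N j)) * e4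
  -- final assembly
  rw [← sub_eq_zero, key (r+1) t, key r (t+1), key t (r+1), key (t+1) r, ← main]
  simp only [Finset.mul_sum, ← Finset.sum_sub_distrib]
  refine Finset.sum_congr rfl fun i _ => Finset.sum_congr rfl fun j _ => ?_
  rw [hz r i, hz t j, hz r j, hz t i]
  simp only [hEdef]
  ring
end
end
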